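/- arXiv:1504.00742 — 7 statements merged into one kernel-verified Lean document; each statement's English description precedes it below -/
import Mathlib

section
/- Let g(s) = a₀ + a₁ s^{α₁} + ⋯ + a_N s^{α_N} with all aᵢ > 0 and 0 < α₁ < ⋯ < α_N, let a = α_N/(α_N + 1), and define K(ξ) = 1/g(s(ξ)) where s(ξ) ≥ 0 is the unique solution of s·g(s) = ξ. Then there exist positive constants d₁, d₂ (depending on g) such that d₁/(1+ξ)^a ≤ K(ξ) ≤ d₂/(1+ξ)^a for all ξ ≥ 0. -/
/-- For `g(s) = a₀ + a₁ s^{α₁} + ⋯ + a_N s^{α_N}` with positive coefficients and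
`0 < α₁ < ⋯ < α_N`, `a = α_N/(α_N+1)`, and `K(ξ) = 1/g(s(ξ))` where `s(ξ) ≥ 0` solves
`s g(s) = ξ`, there are `d₁, d₂ > 0` with `d₁/(1+ξ)^a ≤ K(ξ) ≤ d₂/(1+ξ)^a` for all `ξ ≥ 0`. -/
theorem stmt_6 (N : ℕ) (hN : 1 ≤ N) (a α : ℕ → ℝ)
    (ha : ∀ i ≤ N, 0 < a i) (hα1 : 0 < α 1)
    (hαmono : ∀ i, 1 ≤ i → i < N → α i < α (i + 1))
    (g : ℝ → ℝ) (hg : ∀ x : ℝ, g x = a 0 + ∑ i ∈ Finset.Icc 1 N, a i * x ^ (α i))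
    (s : ℝ → ℝ) (hs : ∀ ξ : ℝ, 0 ≤ ξ → 0 ≤ s ξ ∧ s ξ * g (s ξ) = ξ) :
    ∃ d₁ > (0 : ℝ), ∃ d₂ > (0 : ℝ), ∀ ξ : ℝ, 0 ≤ ξ →
      d₁ / (1 + ξ) ^ (α N / (α N + 1)) ≤ 1 / g (s ξ) ∧
      1 / g (s ξ) ≤ d₂ / (1 + ξ) ^ (α N / (α N + 1)) := by
  have hmono : ∀ i j : ℕ, 1 ≤ i → i ≤ j → j ≤ N → α i ≤ α j := by
    intro i j h1 hij hjN
    induction j, hij using Nat.le_induction with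
    | base => exact le_rfl
    | succ j hj ih =>
        have h1j : 1 ≤ j := le_trans h1 hj
        have hjN' : j < N := by omega
        exact le_trans (ih (by omega)) (hαmono j h1j hjN').le
  have haN : 0 < a N := ha N le_rfl
  have ha0 : 0 < a 0 := ha 0 (Nat.zero_le N)
  have hαN : 0 < α N := lt_of_lt_of_le hα1 (hmono 1 N le_rfl hN le_rfl)
  set A := α N / (α N + 1) with hA
  have hA0 : 0 < A := div_pos hαN (by linarith)
  have hAe : (1 + α N) * A = α N := by
    rw [hA]; field_simp; ring
  set C := a 0 + ∑ i ∈ Finset.Icc 1 N, a i with hCdef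
  have hC0 : 0 < C := by
    have : (0:ℝ) ≤ ∑ i ∈ Finset.Icc 1 N, a i :=
      Finset.sum_nonneg fun i hi => (ha i (Finset.mem_Icc.mp hi).2).le
    linarith
  have hNmem : N ∈ Finset.Icc 1 N := Finset.mem_Icc.mpr ⟨hN, le_rfl⟩
  have hαpos : ∀ i ∈ Finset.Icc 1 N, 0 < α i := by
    intro i hi
    obtain ⟨h1i, hiN⟩ := Finset.mem_Icc.mp hi
    exact lt_of_lt_of_le hα1 (hmono 1 i le_rfl h1i hiN)
  have hαle : ∀ i ∈ Finset.Icc 1 N, α i ≤ α N := by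
    intro i hi
    obtain ⟨h1i, hiN⟩ := Finset.mem_Icc.mp hi
    exact hmono i N h1i hiN le_rfl
  have hmin1 : (0:ℝ) < min 1 (a N ^ A) := lt_min one_pos (Real.rpow_pos_of_pos haN A)
  have hmin2 : (0:ℝ) < min (a 0) (a N) := lt_min ha0 haN
  have h1C : (0:ℝ) < (1 + C) ^ A := Real.rpow_pos_of_pos (by linarith) A
  refine ⟨min 1 (a N ^ A) / C, div_pos hmin1 hC0,
    (1 + C) ^ A / min (a 0) (a N), div_pos h1C hmin2, ?_⟩
  intro ξ hξ
  obtain ⟨ht0, htξ⟩ := hs ξ hξ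
  set t := s ξ with htdef
  -- basic bounds on g t
  have hterm : ∀ i ∈ Finset.Icc 1 N, 0 ≤ a i * t ^ α i := fun i hi =>
    mul_nonneg (ha i (Finset.mem_Icc.mp hi).2).le (Real.rpow_nonneg ht0 _)
  have hga0 : a 0 ≤ g t := by
    rw [hg]
    have : (0:ℝ) ≤ ∑ i ∈ Finset.Icc 1 N, a i * t ^ α i := Finset.sum_nonneg hterm
    linarith
  have hgpos : 0 < g t := lt_of_lt_of_le ha0 hga0
  have hgN : a N * t ^ α N ≤ g t := by
    rw [hg]
    have := Finset.single_le_sum hterm hNmem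
    linarith
  have hP : 0 < (1 + ξ) ^ A := Real.rpow_pos_of_pos (by linarith) A
  -- the two key multiplicative inequalities
  have hI : min 1 (a N ^ A) * g t ≤ C * (1 + ξ) ^ A ∧
      min (a 0) (a N) * (1 + ξ) ^ A ≤ (1 + C) ^ A * g t := by
    rcases le_total t 1 with h | h
    · -- t ≤ 1
      have hgC : g t ≤ C := by
        rw [hg, hCdef]
        have : ∑ i ∈ Finset.Icc 1 N, a i * t ^ α i ≤ ∑ i ∈ Finset.Icc 1 N, a i := by
          refine Finset.sum_le_sum fun i hi => ?_
          have := Real.rpow_le_one ht0 h (hαpos i hi).le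
          nlinarith [ha i (Finset.mem_Icc.mp hi).2]
        linarith
      have hξC : ξ ≤ C := by
        have : t * g t ≤ 1 * C := mul_le_mul h hgC hgpos.le zero_le_one
        rw [htξ] at this; linarith
      have hP1 : 1 ≤ (1 + ξ) ^ A := by
        have := Real.rpow_le_rpow zero_le_one (by linarith : (1:ℝ) ≤ 1 + ξ) hA0.le
        rwa [Real.one_rpow] at this
      have hPC : (1 + ξ) ^ A ≤ (1 + C) ^ A :=
        Real.rpow_le_rpow (by linarith) (by linarith) hA0.le
      constructor
      · nlinarith [min_le_left 1 (a N ^ A)]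
      · nlinarith [min_le_left (a 0) (a N)]
    · -- 1 ≤ t
      have htpos : 0 < t := lt_of_lt_of_le one_pos h
      have hgC' : g t ≤ C * t ^ α N := by
        rw [hg, hCdef, add_mul, Finset.sum_mul]
        have h1t : (1:ℝ) ≤ t ^ α N := by
          have := Real.rpow_le_rpow zero_le_one h hαN.le
          rwa [Real.one_rpow] at this
        refine add_le_add (le_mul_of_one_le_right ha0.le h1t) ?_
        refine Finset.sum_le_sum fun i hi => ?_
        exact mul_le_mul_of_nonneg_left
          (Real.rpow_le_rpow_of_exponent_le h (hαle i hi))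
          (ha i (Finset.mem_Icc.mp hi).2).le
      have hpow : t * t ^ α N = t ^ (1 + α N) := by
        rw [Real.rpow_add htpos, Real.rpow_one]
      have hexp : (t ^ (1 + α N)) ^ A = t ^ α N := by
        rw [← Real.rpow_mul ht0, hAe]
      have hkey : a N ^ A * t ^ α N ≤ (1 + ξ) ^ A := by
        have h1 : a N * t ^ (1 + α N) ≤ 1 + ξ := by
          have h2 : t * (a N * t ^ α N) ≤ t * g t :=
            mul_le_mul_of_nonneg_left hgN ht0
          rw [htξ] at h2
          have he : t * (a N * t ^ α N) = a N * t ^ (1 + α N) := by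
            rw [← hpow]; ring
          rw [he] at h2; linarith
        calc a N ^ A * t ^ α N = (a N * t ^ (1 + α N)) ^ A := by
              rw [Real.mul_rpow haN.le (Real.rpow_nonneg ht0 _), hexp]
          _ ≤ (1 + ξ) ^ A := Real.rpow_le_rpow (by positivity) h1 hA0.le
      have hkey2 : (1 + ξ) ^ A ≤ (1 + C) ^ A * t ^ α N := by
        have h1t : (1:ℝ) ≤ t ^ (1 + α N) := by
          have := Real.rpow_le_rpow zero_le_one h (by linarith : (0:ℝ) ≤ 1 + α N)
          rwa [Real.one_rpow] at this
        have hξ2 : ξ ≤ C * t ^ (1 + α N) := by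
          have h2 : t * g t ≤ t * (C * t ^ α N) :=
            mul_le_mul_of_nonneg_left hgC' ht0
          rw [htξ] at h2
          have he : t * (C * t ^ α N) = C * t ^ (1 + α N) := by
            rw [← hpow]; ring
          rw [he] at h2; linarith
        have h3 : 1 + ξ ≤ (1 + C) * t ^ (1 + α N) := by
          have : (1 + C) * t ^ (1 + α N) = t ^ (1 + α N) + C * t ^ (1 + α N) := by ring
          linarith
        calc (1 + ξ) ^ A ≤ ((1 + C) * t ^ (1 + α N)) ^ A :=
              Real.rpow_le_rpow (by linarith) h3 hA0.le
          _ = (1 + C) ^ A * t ^ α N := by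
              rw [Real.mul_rpow (by linarith) (Real.rpow_nonneg ht0 _), hexp]
      constructor
      · calc min 1 (a N ^ A) * g t
            ≤ a N ^ A * g t :=
              mul_le_mul_of_nonneg_right (min_le_right _ _) hgpos.le
          _ ≤ a N ^ A * (C * t ^ α N) :=
              mul_le_mul_of_nonneg_left hgC' (Real.rpow_pos_of_pos haN A).le
          _ = C * (a N ^ A * t ^ α N) := by ring
          _ ≤ C * (1 + ξ) ^ A := mul_le_mul_of_nonneg_left hkey hC0.le
      · calc min (a 0) (a N) * (1 + ξ) ^ A
            ≤ min (a 0) (a N) * ((1 + C) ^ A * t ^ α N) :=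
              mul_le_mul_of_nonneg_left hkey2 hmin2.le
          _ ≤ a N * ((1 + C) ^ A * t ^ α N) :=
              mul_le_mul_of_nonneg_right (min_le_right _ _) (by positivity)
          _ = (1 + C) ^ A * (a N * t ^ α N) := by ring
          _ ≤ (1 + C) ^ A * g t := mul_le_mul_of_nonneg_left hgN h1C.le
  obtain ⟨hI1, hI2⟩ := hI
  constructor
  · rw [div_div, div_le_div_iff₀ (by positivity) hgpos, one_mul]
    exact hI1
  · rw [div_div, div_le_div_iff₀ hgpos (by positivity), one_mul]
    exact hI2
end

section
/- With K as above, there exist positive constants d₂, d₃ (depending on g) such that d₃ (ξ^{2-a} − 1) ≤ K(ξ) ξ² ≤ d₂ ξ^{2-a} for all ξ ≥ 0, where a = α_N/(α_N+1). -/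
/-!
Since `s g(s) = ξ`, we have `K(ξ) ξ² = s(ξ) ξ`, and `2 - a = 1 + 1/(α_N + 1)`. The two-sided bound
`a_N s^{α_N} ≤ g(s) ≤ C max(1, s^{α_N})` inverts, through `ξ = s g(s)`, to
`s(ξ) ≤ (ξ / a_N)^{1/(α_N+1)}` and, for `ξ ≥ 1`, to `ξ^{1/(α_N+1)} ≤ C s(ξ)`;
for `ξ ≤ 1` the lower bound is trivial thanks to the `- 1`.
-/

open Real Finset

lemma strictMonoOn_Icc_of_lt_succ {β : Type*} [Preorder β] {α : ℕ → β} {m N : ℕ}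
    (h : ∀ i, m ≤ i → i < N → α i < α (i + 1)) :
    StrictMonoOn α (Set.Icc m N) :=
  strictMonoOn_of_lt_succ Set.ordConnected_Icc fun i _ hi hi1 ↦ h i hi.1 (by simpa using hi1.2)

lemma rpow_le_max_one_rpow {x β n : ℝ} (hx : 0 ≤ x) (hβ : 0 ≤ β) (hβn : β ≤ n) :
    x ^ β ≤ max 1 (x ^ n) := by
  rcases le_or_gt x 1 with hx1 | hx1
  · exact le_max_of_le_left (rpow_le_one hx hx1 hβ)
  · exact le_max_of_le_right (rpow_le_rpow_of_exponent_le hx1.le hβn)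

lemma sum_mul_rpow_le_mul_max_one_rpow {ι : Type*} (s : Finset ι) {c β : ι → ℝ} {x n : ℝ}
    (hx : 0 ≤ x) (hc : ∀ i ∈ s, 0 ≤ c i) (hβ : ∀ i ∈ s, 0 ≤ β i ∧ β i ≤ n) :
    ∑ i ∈ s, c i * x ^ β i ≤ (∑ i ∈ s, c i) * max 1 (x ^ n) := by
  rw [sum_mul]
  exact sum_le_sum fun i hi ↦
    mul_le_mul_of_nonneg_left (rpow_le_max_one_rpow hx (hβ i hi).1 (hβ i hi).2) (hc i hi)

lemma one_div_mul_sq_eq_mul {t G ξ : ℝ} (h : t * G = ξ) : 1 / G * ξ ^ 2 = t * ξ := by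
  rcases eq_or_ne G 0 with rfl | hG
  · simp [← h]
  · rw [← h]; field_simp

section GeneralizedPolynomial

variable {N : ℕ} {a α : ℕ → ℝ} {x : ℝ}

lemma mul_rpow_le_add_sum_mul_rpow (hN : 1 ≤ N) (ha : ∀ i ≤ N, 0 ≤ a i) (hx : 0 ≤ x) :
    a N * x ^ α N ≤ a 0 + ∑ i ∈ Icc 1 N, a i * x ^ α i := by
  have := single_le_sum (f := fun i ↦ a i * x ^ α i)
    (fun i hi ↦ mul_nonneg (ha i (mem_Icc.1 hi).2) (rpow_nonneg hx _)) (mem_Icc.2 ⟨hN, le_rfl⟩)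
  linarith [ha 0 N.zero_le]

lemma add_sum_mul_rpow_le (ha : ∀ i ≤ N, 0 ≤ a i) (hα : ∀ i ∈ Icc 1 N, 0 ≤ α i ∧ α i ≤ α N)
    (hx : 0 ≤ x) :
    a 0 + ∑ i ∈ Icc 1 N, a i * x ^ α i ≤
      max 1 (a 0 + ∑ i ∈ Icc 1 N, a i) * max 1 (x ^ α N) := calc
  _ ≤ a 0 * max 1 (x ^ α N) + (∑ i ∈ Icc 1 N, a i) * max 1 (x ^ α N) := by
    gcongr ?_ + ?_
    · exact le_mul_of_one_le_right (ha 0 N.zero_le) (le_max_left _ _)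
    · exact sum_mul_rpow_le_mul_max_one_rpow _ hx (fun i hi ↦ ha i (mem_Icc.1 hi).2) hα
  _ ≤ _ := by
    rw [← add_mul]
    gcongr
    exact le_max_right _ _

end GeneralizedPolynomial

section InverseGrowth

variable {n t G ξ : ℝ}

lemma mul_le_inv_rpow_mul_rpow_one_add {c : ℝ} (hn : 0 ≤ n) (hc : 0 < c) (ht : 0 ≤ t)
    (hG : c * t ^ n ≤ G) (h : t * G = ξ) :
    t * ξ ≤ (c ^ (n + 1)⁻¹)⁻¹ * ξ ^ (1 + (n + 1)⁻¹) := by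
  have hn1 : 0 < n + 1 := by linarith
  have hξ_ge : c * t ^ (n + 1) ≤ ξ := by
    rw [rpow_add_one' ht hn1.ne', ← h]
    nlinarith
  have hξ : 0 ≤ ξ := le_trans (by positivity) hξ_ge
  have ht_le : t ≤ (ξ / c) ^ (n + 1)⁻¹ := by
    rw [le_rpow_inv_iff_of_pos ht (by positivity) hn1, le_div_iff₀ hc]
    linarith
  calc t * ξ ≤ (ξ / c) ^ (n + 1)⁻¹ * ξ := mul_le_mul_of_nonneg_right ht_le hξ
    _ = (c ^ (n + 1)⁻¹)⁻¹ * ξ ^ (1 + (n + 1)⁻¹) := by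
      rw [div_rpow hξ hc.le, rpow_one_add' hξ (by positivity)]
      ring

lemma inv_mul_rpow_one_add_sub_one_le_mul {C : ℝ} (hn : 0 ≤ n) (hC : 1 ≤ C) (ht : 0 ≤ t)
    (hξ : 0 ≤ ξ) (hG : G ≤ C * max 1 (t ^ n)) (h : t * G = ξ) :
    C⁻¹ * (ξ ^ (1 + (n + 1)⁻¹) - 1) ≤ t * ξ := by
  have hn1 : 0 < n + 1 := by linarith
  rcases le_or_gt ξ 1 with hξ1 | hξ1
  · have : ξ ^ (1 + (n + 1)⁻¹) ≤ 1 := rpow_le_one hξ hξ1 (by positivity)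
    have : 0 ≤ C⁻¹ := by positivity
    nlinarith [mul_nonneg ht hξ]
  suffices hq : ξ ^ (n + 1)⁻¹ ≤ C * t by
    rw [rpow_one_add' hξ (by positivity), inv_mul_le_iff₀ (by positivity)]
    nlinarith
  have hξ_le : ξ ≤ C * t * max 1 (t ^ n) := by
    rw [← h]; nlinarith
  rcases le_or_gt t 1 with ht1 | ht1
  · rw [max_eq_left (rpow_le_one ht ht1 hn), mul_one] at hξ_le
    calc ξ ^ (n + 1)⁻¹ ≤ ξ ^ (1 : ℝ) :=
          rpow_le_rpow_of_exponent_le hξ1.le (inv_le_one_of_one_le₀ (by linarith))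
      _ = ξ := rpow_one ξ
      _ ≤ C * t := hξ_le
  · rw [max_eq_right (one_le_rpow ht1.le hn)] at hξ_le
    have hC_pow : C ≤ C ^ (n + 1) := by
      simpa using rpow_le_rpow_of_exponent_le hC (by linarith : (1 : ℝ) ≤ n + 1)
    rw [rpow_inv_le_iff_of_pos hξ (by positivity) hn1, mul_rpow (by linarith) ht,
      rpow_add_one' ht hn1.ne']
    nlinarith [rpow_nonneg ht n]

end InverseGrowth

/-- With `K(ξ) = 1/g(s(ξ))` as before and `a = α_N/(α_N+1)`, there are `d₂, d₃ > 0` with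
`d₃ (ξ^{2-a} − 1) ≤ K(ξ) ξ² ≤ d₂ ξ^{2-a}` for all `ξ ≥ 0`. -/
theorem stmt_7 (N : ℕ) (hN : 1 ≤ N) (a α : ℕ → ℝ)
    (ha : ∀ i ≤ N, 0 < a i) (hα1 : 0 < α 1)
    (hαmono : ∀ i, 1 ≤ i → i < N → α i < α (i + 1))
    (g : ℝ → ℝ) (hg : ∀ x : ℝ, g x = a 0 + ∑ i ∈ Finset.Icc 1 N, a i * x ^ (α i))
    (s : ℝ → ℝ) (hs : ∀ ξ : ℝ, 0 ≤ ξ → 0 ≤ s ξ ∧ s ξ * g (s ξ) = ξ) :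
    ∃ d₂ > (0 : ℝ), ∃ d₃ > (0 : ℝ), ∀ ξ : ℝ, 0 ≤ ξ →
      d₃ * (ξ ^ (2 - α N / (α N + 1)) - 1) ≤ (1 / g (s ξ)) * ξ ^ 2 ∧
      (1 / g (s ξ)) * ξ ^ 2 ≤ d₂ * ξ ^ (2 - α N / (α N + 1)) := by
  have hα : ∀ i ∈ Icc 1 N, 0 ≤ α i ∧ α i ≤ α N := fun i hi ↦ by
    have hmono := (strictMonoOn_Icc_of_lt_succ hαmono).monotoneOn
    have hi' : i ∈ Set.Icc 1 N := by simpa using hi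
    have hN' : N ∈ Set.Icc 1 N := ⟨hN, le_rfl⟩
    exact ⟨hα1.le.trans (hmono ⟨le_rfl, hN⟩ hi' hi'.1), hmono hi' hN' hi'.2⟩
  have hn : 0 ≤ α N := (hα N (mem_Icc.2 ⟨hN, le_rfl⟩)).1
  have ha' : ∀ i ≤ N, 0 ≤ a i := fun i hi ↦ (ha i hi).le
  have hexp : 2 - α N / (α N + 1) = 1 + (α N + 1)⁻¹ := by field_simp; ring
  refine ⟨(a N ^ (α N + 1)⁻¹)⁻¹, by have := ha N le_rfl; positivity,
    (max 1 (a 0 + ∑ i ∈ Icc 1 N, a i))⁻¹, by positivity, fun ξ hξ ↦ ?_⟩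
  obtain ⟨ht, hsg⟩ := hs ξ hξ
  rw [hexp, one_div_mul_sq_eq_mul hsg]
  exact ⟨inv_mul_rpow_one_add_sub_one_le_mul hn (le_max_left _ _) ht hξ
      (hg (s ξ) ▸ add_sum_mul_rpow_le ha' hα ht) hsg,
    mul_le_inv_rpow_mul_rpow_one_add hn (ha N le_rfl) ht
      (hg (s ξ) ▸ mul_rpow_le_add_sum_mul_rpow hN ha' ht) hsg⟩
end

section
/- Under the hypotheses of the previous iteration lemma (y_{j+1} ≤ A^{α_j} y_j^{β_j}, A ≥ 1, Σ α_j = ᾱ < ∞, Π β_j = β̄ ∈ (0,∞)), one has limsup_{j→∞} y_j ≤ A^{B ᾱ} y₀^{β̄}, where B = limsup_{j→∞} B_j with B_j = max{1, β_m⋯β_n : 1 ≤ m ≤ n < j}. -/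
/-- Under the iteration hypotheses `y_{j+1} ≤ A^{α_j} y_j^{β_j}`, `A ≥ 1`, `Σ α_j = ᾱ < ∞`,
`Π β_j = β̄ ∈ (0,∞)`, one has `limsup y_j ≤ A^{B ᾱ} y₀^{β̄}` where `B = limsup B_j`. -/
theorem stmt_10 (y α β : ℕ → ℝ)
    (hy : ∀ j, 0 ≤ y j) (hα : ∀ j, 0 < α j) (hβ : ∀ j, 0 < β j)
    (hαsum : Summable α)
    (β' : ℝ) (hβ' : 0 < β')
    (hβprod : Filter.Tendsto (fun j => ∏ i ∈ Finset.range j, β i) Filter.atTop (nhds β'))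
    (A : ℝ) (hA : 1 ≤ A)
    (hrec : ∀ j, y (j + 1) ≤ A ^ (α j) * (y j) ^ (β j))
    (B : ℕ → ℝ)
    (hB : ∀ j, IsGreatest
      (insert (1 : ℝ)
        {x : ℝ | ∃ m n : ℕ, 1 ≤ m ∧ m ≤ n ∧ n < j ∧ x = ∏ i ∈ Finset.Icc m n, β i})
      (B j)) :
    Filter.limsup y Filter.atTop ≤
      A ^ ((Filter.limsup B Filter.atTop) * ∑' j, α j) * (y 0) ^ β' := by
  have hA0 : (0:ℝ) < A := lt_of_lt_of_le one_pos hA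
  set P : ℕ → ℝ := fun j => ∏ i ∈ Finset.range j, β i with hPdef
  have hPpos : ∀ j, 0 < P j := fun j => Finset.prod_pos (fun i _ => hβ i)
  have hPsucc : ∀ j, P (j+1) = P j * β j := fun j => Finset.prod_range_succ β j
  -- Icc products as ratios
  have hIcc : ∀ m n : ℕ, m ≤ n + 1 → ∏ i ∈ Finset.Icc m n, β i = P (n+1) / P m := by
    intro m n h
    rw [eq_div_iff (hPpos m).ne']
    simp only [hPdef, Finset.range_eq_Ico, ← Finset.Ico_add_one_right_eq_Icc]
    rw [mul_comm, Finset.prod_Ico_consecutive β (Nat.zero_le m) h]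
  -- bounds on P
  obtain ⟨M, hM⟩ : ∃ M, ∀ j, P j ≤ M := by
    obtain ⟨M, hM⟩ := hβprod.bddAbove_range
    exact ⟨M, fun j => hM ⟨j, rfl⟩⟩
  obtain ⟨ε, hε, hεle⟩ : ∃ ε > 0, ∀ j, ε ≤ P j := by
    have hev : ∀ᶠ j in Filter.atTop, β' / 2 < P j :=
      hβprod.eventually (eventually_gt_nhds (half_lt_self hβ'))
    obtain ⟨N, hN⟩ := hev.exists_forall_of_atTop
    refine ⟨min (β'/2) ((Finset.range (N+1)).inf' ⟨0, Finset.mem_range.2 (Nat.succ_pos N)⟩ P),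
      lt_min (half_pos hβ') ?_, ?_⟩
    · exact (Finset.lt_inf'_iff _).2 fun i _ => hPpos i
    · intro j
      rcases le_or_gt j N with hj | hj
      · exact (min_le_right _ _).trans (Finset.inf'_le P (Finset.mem_range.2 (Nat.lt_succ_of_le hj)))
      · exact (min_le_left _ _).trans (hN j hj.le).le
  -- B basic facts
  have hB1 : ∀ j, 1 ≤ B j := fun j => (hB j).2 (Set.mem_insert 1 _)
  have hBmono : Monotone B := by
    refine monotone_nat_of_le_succ fun j => (hB (j+1)).2 ?_
    rcases (hB j).1 with h | ⟨m, n, hm, hmn, hnj, hx⟩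
    · exact Or.inl h
    · exact Or.inr ⟨m, n, hm, hmn, hnj.trans (Nat.lt_succ_self j), hx⟩
  have hBbdd : BddAbove (Set.range B) := by
    refine ⟨max 1 (M/ε), fun x ⟨j, hj⟩ => ?_⟩
    subst hj
    rcases (hB j).1 with h | ⟨m, n, hm, hmn, _, hx⟩
    · exact h ▸ le_max_left _ _
    · rw [hx, hIcc m n (hmn.trans (Nat.le_succ n))]
      exact le_max_of_le_right
        (div_le_div₀ ((hPpos (n+1)).le.trans (hM (n+1))) (hM (n+1)) hε (hεle m))
  set L := ⨆ j, B j with hLdef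
  have hBL : ∀ j, B j ≤ L := le_ciSup hBbdd
  have hL : Filter.limsup B Filter.atTop = L :=
    (tendsto_atTop_ciSup hBmono hBbdd).limsup_eq
  set S := ∑' j, α j with hSdef
  have hS0 : (0:ℝ) ≤ S := tsum_nonneg fun j => (hα j).le
  -- the iterated bound
  set c : ℕ → ℝ := fun j => ∑ i ∈ Finset.range j, α i * (P j / P (i+1)) with hcdef
  have hcsucc : ∀ j, c (j+1) = c j * β j + α j := by
    intro j
    simp only [hcdef, Finset.sum_range_succ, div_self (hPpos (j+1)).ne', mul_one,
      Finset.sum_mul]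
    congr 1
    refine Finset.sum_congr rfl fun i _ => ?_
    rw [hPsucc j]
    have := (hPpos (i+1)).ne'
    field_simp
  have hmain : ∀ j, y j ≤ A ^ (c j) * (y 0) ^ (P j) := by
    intro j
    induction j with
    | zero => simp [hcdef, hPdef]
    | succ j ih =>
      have h1 : y (j+1) ≤ A ^ (α j) * (A ^ (c j) * (y 0) ^ (P j)) ^ (β j) := by
        refine (hrec j).trans ?_
        exact mul_le_mul_of_nonneg_left
          (Real.rpow_le_rpow (hy j) ih (hβ j).le) (Real.rpow_nonneg hA0.le _)
      refine h1.trans (le_of_eq ?_)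
      rw [Real.mul_rpow (Real.rpow_nonneg hA0.le _) (Real.rpow_nonneg (hy 0) _),
        ← Real.rpow_mul hA0.le, ← Real.rpow_mul (hy 0), hcsucc j, hPsucc j,
        Real.rpow_add hA0]
      ring
  -- bound on c
  have hcle : ∀ j, c j ≤ L * S := by
    intro j
    have h1 : ∀ i ∈ Finset.range j, α i * (P j / P (i+1)) ≤ α i * B j := by
      intro i hi
      refine mul_le_mul_of_nonneg_left ?_ (hα i).le
      rcases eq_or_lt_of_le (Nat.succ_le_of_lt (Finset.mem_range.1 hi)) with h | h
      · rw [show i + 1 = j from h, div_self (hPpos j).ne']; exact hB1 j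
      · have hj1 : i + 1 ≤ j - 1 := by omega
        have hj : j - 1 + 1 = j := by omega
        have hmem : P j / P (i+1) ∈ insert (1 : ℝ)
            {x : ℝ | ∃ m n : ℕ, 1 ≤ m ∧ m ≤ n ∧ n < j ∧ x = ∏ i ∈ Finset.Icc m n, β i} := by
          refine Set.mem_insert_iff.2 (Or.inr ⟨i+1, j-1, Nat.succ_le_succ (Nat.zero_le i),
            hj1, by omega, ?_⟩)
          rw [hIcc (i+1) (j-1) (by omega), hj]
        exact (hB j).2 hmem
    calc c j ≤ ∑ i ∈ Finset.range j, α i * B j := Finset.sum_le_sum h1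
      _ = (∑ i ∈ Finset.range j, α i) * B j := by rw [Finset.sum_mul]
      _ ≤ S * B j := mul_le_mul_of_nonneg_right
            (Summable.sum_le_tsum _ (fun i _ => (hα i).le) hαsum)
            (le_trans zero_le_one (hB1 j))
      _ ≤ S * L := mul_le_mul_of_nonneg_left (hBL j) hS0
      _ = L * S := mul_comm _ _
  have hyg : ∀ j, y j ≤ A ^ (L * S) * (y 0) ^ (P j) := fun j =>
    (hmain j).trans (mul_le_mul_of_nonneg_right
      (Real.rpow_le_rpow_of_exponent_le hA (hcle j)) (Real.rpow_nonneg (hy 0) _))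
  have hgt : Filter.Tendsto (fun j => A ^ (L * S) * (y 0) ^ (P j)) Filter.atTop
      (nhds (A ^ (L * S) * (y 0) ^ β')) := by
    rcases eq_or_lt_of_le (hy 0) with h0 | h0
    · have heq : ∀ j, A ^ (L*S) * (y 0) ^ β' = A ^ (L*S) * (y 0) ^ (P j) := by
        intro j; rw [← h0, Real.zero_rpow (hPpos j).ne', Real.zero_rpow hβ'.ne']
      exact Filter.Tendsto.congr heq tendsto_const_nhds
    · exact ((Real.continuousAt_const_rpow h0.ne').tendsto.comp hβprod).const_mul _
  rw [hL]
  have hcb : Filter.IsCoboundedUnder (· ≤ ·) Filter.atTop y :=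
    (Filter.isBoundedUnder_of_eventually_ge (Filter.Eventually.of_forall fun j => hy j)).isCoboundedUnder_le
  calc Filter.limsup y Filter.atTop
      ≤ Filter.limsup (fun j => A ^ (L*S) * (y 0) ^ (P j)) Filter.atTop :=
        Filter.limsup_le_limsup (Filter.Eventually.of_forall hyg) hcb hgt.isBoundedUnder_le
    _ = _ := hgt.limsup_eq
end

section
/- Let (y_j)_{j≥0} be nonnegative reals, and for each j let κ_j > 0, s_j ≥ r_j > 0, ω_j ≥ 1, with A ≥ 1 and y_{j+1} ≤ A^{ω_j/κ_j} (y_j^{r_j} + y_j^{s_j})^{1/κ_j} for all j. Set β_j = r_j/κ_j, γ_j = s_j/κ_j, and assume ᾱ := Σ_j ω_j/κ_j < ∞ and the products Π β_j, Π γ_j converge to positive numbers β̄, γ̄. Then for all j ≥ 1, y_j ≤ (2A)^{G_j ᾱ} max{ y₀^{γ₀⋯γ_{j-1}}, y₀^{β₀⋯β_{j-1}} }, where G_j = max{1, γ_m γ_{m+1}⋯γ_n : 1 ≤ m ≤ n < j}. -/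
private lemma aux_rpow_max (x a b e : ℝ) (hx : 0 ≤ x) (ha : 0 < a) (hae : a ≤ e)
    (heb : e ≤ b) : x ^ e ≤ max (x ^ b) (x ^ a) := by
  rcases eq_or_lt_of_le hx with h0 | h0
  · rw [← h0, Real.zero_rpow (by linarith : e ≠ 0)]
    exact le_max_of_le_right (le_of_eq (Real.zero_rpow (by linarith : a ≠ 0)).symm)
  · rcases le_total x 1 with hx1 | hx1
    · exact le_max_of_le_right (Real.rpow_le_rpow_of_exponent_ge h0 hx1 hae)
    · exact le_max_of_le_left (Real.rpow_le_rpow_of_exponent_le hx1 heb)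

/-- Two-term iteration lemma: if `y_{j+1} ≤ A^{ω_j/κ_j} (y_j^{r_j} + y_j^{s_j})^{1/κ_j}` with
`A ≥ 1`, `ω_j ≥ 1`, `κ_j > 0`, `s_j ≥ r_j > 0`, `β_j = r_j/κ_j`, `γ_j = s_j/κ_j`,
`Σ ω_j/κ_j < ∞`, and `Π β_j`, `Π γ_j` converging to positive numbers, then for `j ≥ 1`,
`y_j ≤ (2A)^{G_j ᾱ} max{y₀^{γ₀⋯γ_{j-1}}, y₀^{β₀⋯β_{j-1}}}` where `G_j` is the maximum of `1`
and all consecutive products `γ_m ⋯ γ_n` with `1 ≤ m ≤ n < j`. -/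
theorem stmt_11 (y κ r s ω : ℕ → ℝ)
    (hy : ∀ j, 0 ≤ y j) (hκ : ∀ j, 0 < κ j) (hr : ∀ j, 0 < r j) (hrs : ∀ j, r j ≤ s j)
    (hω : ∀ j, 1 ≤ ω j)
    (hαsum : Summable (fun j => ω j / κ j))
    (β' γ' : ℝ) (hβ' : 0 < β') (hγ' : 0 < γ')
    (hβprod : Filter.Tendsto (fun j => ∏ i ∈ Finset.range j, r i / κ i)
      Filter.atTop (nhds β'))
    (hγprod : Filter.Tendsto (fun j => ∏ i ∈ Finset.range j, s i / κ i)
      Filter.atTop (nhds γ'))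
    (A : ℝ) (hA : 1 ≤ A)
    (hrec : ∀ j, y (j + 1) ≤ A ^ (ω j / κ j) * ((y j) ^ (r j) + (y j) ^ (s j)) ^ (1 / κ j))
    (G : ℕ → ℝ)
    (hG : ∀ j, IsGreatest
      (insert (1 : ℝ)
        {x : ℝ | ∃ m n : ℕ, 1 ≤ m ∧ m ≤ n ∧ n < j ∧ x = ∏ i ∈ Finset.Icc m n, s i / κ i})
      (G j)) :
    ∀ j : ℕ, 1 ≤ j →
      y j ≤ (2 * A) ^ (G j * ∑' i, ω i / κ i) *
        max ((y 0) ^ (∏ i ∈ Finset.range j, s i / κ i))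
            ((y 0) ^ (∏ i ∈ Finset.range j, r i / κ i)) := by
  have h2A : (1 : ℝ) ≤ 2 * A := by linarith
  have h2A0 : (0 : ℝ) ≤ 2 * A := by linarith
  have hs : ∀ j, 0 < s j := fun j => lt_of_lt_of_le (hr j) (hrs j)
  have hβpos : ∀ j, 0 < r j / κ j := fun j => div_pos (hr j) (hκ j)
  have hγpos : ∀ j, 0 < s j / κ j := fun j => div_pos (hs j) (hκ j)
  have hβγ : ∀ j, r j / κ j ≤ s j / κ j := fun j => (div_le_div_iff_of_pos_right (hκ j)).mpr (hrs j)
  set c : ℕ → ℝ := fun j => ∑ i ∈ Finset.range j,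
    (ω i / κ i) * ∏ k ∈ Finset.Ico (i+1) j, s k / κ k with hc
  have hα0 : ∀ j, 0 ≤ ω j / κ j := fun j => le_of_lt (div_pos (by linarith [hω j]) (hκ j))
  have hc0 : ∀ j, 0 ≤ c j := by
    intro j
    apply Finset.sum_nonneg
    intro i _
    exact mul_nonneg (hα0 i) (Finset.prod_nonneg fun k _ => (hγpos k).le)
  have hc_succ : ∀ j, c (j+1) = ω j / κ j + c j * (s j / κ j) := by
    intro j
    simp only [hc, Finset.sum_range_succ, Finset.Ico_self, Finset.prod_empty, mul_one]
    rw [add_comm, Finset.sum_mul]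
    congr 1
    apply Finset.sum_congr rfl
    intro i hi
    rw [Finset.prod_Ico_succ_top (Nat.succ_le_of_lt (Finset.mem_range.mp hi)), mul_assoc]
  have hΓpos : ∀ j, 0 < ∏ i ∈ Finset.range j, s i / κ i :=
    fun j => Finset.prod_pos fun i _ => hγpos i
  have hBpos : ∀ j, 0 < ∏ i ∈ Finset.range j, r i / κ i :=
    fun j => Finset.prod_pos fun i _ => hβpos i
  have hBΓ : ∀ j, (∏ i ∈ Finset.range j, r i / κ i) ≤ ∏ i ∈ Finset.range j, s i / κ i :=
    fun j => Finset.prod_le_prod (fun i _ => (hβpos i).le) (fun i _ => hβγ i)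
  -- main induction
  have main : ∀ j, y j ≤ (2 * A) ^ (c j) *
      max ((y 0) ^ (∏ i ∈ Finset.range j, s i / κ i))
          ((y 0) ^ (∏ i ∈ Finset.range j, r i / κ i)) := by
    intro j
    induction j with
    | zero =>
      simp only [hc, Finset.range_zero, Finset.sum_empty, Finset.prod_empty, Real.rpow_zero,
        Real.rpow_one, one_mul, max_self]
      exact le_rfl
    | succ j IH =>
      set Γ := ∏ i ∈ Finset.range j, s i / κ i with hΓ
      set B := ∏ i ∈ Finset.range j, r i / κ i with hB
      set M := max ((y 0) ^ Γ) ((y 0) ^ B) with hM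
      set M' := max ((y 0) ^ (Γ * (s j / κ j))) ((y 0) ^ (B * (r j / κ j))) with hM'
      have hM0 : 0 ≤ M := le_max_of_le_left (Real.rpow_nonneg (hy 0) _)
      have hM'0 : 0 ≤ M' := le_max_of_le_left (Real.rpow_nonneg (hy 0) _)
      -- key pointwise step
      have key : y (j+1) ≤ (2 * A) ^ (ω j / κ j) *
          max ((y j) ^ (s j / κ j)) ((y j) ^ (r j / κ j)) := by
        have h1 : y j ^ r j + y j ^ s j ≤ 2 * max (y j ^ r j) (y j ^ s j) := by
          rw [two_mul]
          exact add_le_add (le_max_left _ _) (le_max_right _ _)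
        have hsum0 : 0 ≤ y j ^ r j + y j ^ s j :=
          add_nonneg (Real.rpow_nonneg (hy j) _) (Real.rpow_nonneg (hy j) _)
        have h2 : (y j ^ r j + y j ^ s j) ^ (1 / κ j) ≤
            (2 * max (y j ^ r j) (y j ^ s j)) ^ (1 / κ j) :=
          Real.rpow_le_rpow hsum0 h1 (one_div_nonneg.mpr (hκ j).le)
        have hmax0 : 0 ≤ max (y j ^ r j) (y j ^ s j) :=
          le_max_of_le_left (Real.rpow_nonneg (hy j) _)
        have h3 : (2 * max (y j ^ r j) (y j ^ s j)) ^ (1 / κ j) =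
            2 ^ (1 / κ j) * (max (y j ^ r j) (y j ^ s j)) ^ (1 / κ j) :=
          Real.mul_rpow (by norm_num) hmax0
        have h4 : (max (y j ^ r j) (y j ^ s j)) ^ (1 / κ j) ≤
            max ((y j) ^ (s j / κ j)) ((y j) ^ (r j / κ j)) := by
          rcases max_choice (y j ^ r j) (y j ^ s j) with h | h <;> rw [h, ← Real.rpow_mul (hy j),
            mul_one_div]
          · exact le_max_right _ _
          · exact le_max_left _ _
        have h5 : (2:ℝ) ^ (1 / κ j) ≤ 2 ^ (ω j / κ j) :=
          Real.rpow_le_rpow_of_exponent_le (by norm_num)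
            (div_le_div_of_nonneg_right (hω j) (hκ j).le)
        calc y (j+1) ≤ A ^ (ω j / κ j) * ((y j) ^ (r j) + (y j) ^ (s j)) ^ (1 / κ j) := hrec j
          _ ≤ A ^ (ω j / κ j) * (2 ^ (1 / κ j) *
              (max (y j ^ r j) (y j ^ s j)) ^ (1 / κ j)) := by
            rw [← h3]
            exact mul_le_mul_of_nonneg_left h2 (Real.rpow_nonneg (by linarith) _)
          _ ≤ A ^ (ω j / κ j) * (2 ^ (ω j / κ j) *
              max ((y j) ^ (s j / κ j)) ((y j) ^ (r j / κ j))) := by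
            apply mul_le_mul_of_nonneg_left _ (Real.rpow_nonneg (by linarith) _)
            exact mul_le_mul h5 h4 (Real.rpow_nonneg hmax0 _)
              (Real.rpow_nonneg (by norm_num) _)
          _ = (2 * A) ^ (ω j / κ j) *
              max ((y j) ^ (s j / κ j)) ((y j) ^ (r j / κ j)) := by
            rw [Real.mul_rpow (by norm_num) (by linarith : (0:ℝ) ≤ A)]
            ring
      -- bound each power of y j
      have hpow : ∀ p : ℝ, 0 < p → r j / κ j ≤ p → p ≤ s j / κ j →
          y j ^ p ≤ (2*A) ^ (c j * (s j / κ j)) * M' := by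
        intro p hp hp2 hps
        have step1 : y j ^ p ≤ ((2*A) ^ (c j) * M) ^ p :=
          Real.rpow_le_rpow (hy j) IH hp.le
        have step2 : ((2*A) ^ (c j) * M) ^ p = (2*A) ^ (c j * p) * M ^ p := by
          rw [Real.mul_rpow (Real.rpow_nonneg h2A0 _) hM0, ← Real.rpow_mul h2A0]
        have step3 : M ^ p ≤ M' := by
          have hBβ : 0 < B * (r j / κ j) := mul_pos (hBpos j) (hβpos j)
          rcases max_choice ((y 0) ^ Γ) ((y 0) ^ B) with h | h <;>
            rw [hM, h, ← Real.rpow_mul (hy 0)]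
          · exact aux_rpow_max _ _ _ _ (hy 0) hBβ
              (mul_le_mul (hBΓ j) hp2 (hβpos j).le (hΓpos j).le)
              (mul_le_mul_of_nonneg_left hps (hΓpos j).le)
          · exact aux_rpow_max _ _ _ _ (hy 0) hBβ
              (mul_le_mul_of_nonneg_left hp2 (hBpos j).le)
              (mul_le_mul (hBΓ j) hps hp.le (hΓpos j).le)
        have step4 : (2*A) ^ (c j * p) ≤ (2*A) ^ (c j * (s j / κ j)) :=
          Real.rpow_le_rpow_of_exponent_le h2A (mul_le_mul_of_nonneg_left hps (hc0 j))
        calc y j ^ p ≤ (2*A) ^ (c j * p) * M ^ p := by rw [← step2]; exact step1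
          _ ≤ (2*A) ^ (c j * (s j / κ j)) * M' :=
            mul_le_mul step4 step3 (Real.rpow_nonneg hM0 _) (Real.rpow_nonneg h2A0 _)
      -- combine
      have hmaxle : max ((y j) ^ (s j / κ j)) ((y j) ^ (r j / κ j)) ≤
          (2*A) ^ (c j * (s j / κ j)) * M' :=
        max_le (hpow _ (hγpos j) (hβγ j) le_rfl) (hpow _ (hβpos j) le_rfl (hβγ j))
      calc y (j+1) ≤ (2 * A) ^ (ω j / κ j) *
            max ((y j) ^ (s j / κ j)) ((y j) ^ (r j / κ j)) := key
        _ ≤ (2 * A) ^ (ω j / κ j) * ((2*A) ^ (c j * (s j / κ j)) * M') :=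
          mul_le_mul_of_nonneg_left hmaxle (Real.rpow_nonneg h2A0 _)
        _ = (2 * A) ^ (c (j+1)) * max ((y 0) ^ (∏ i ∈ Finset.range (j+1), s i / κ i))
            ((y 0) ^ (∏ i ∈ Finset.range (j+1), r i / κ i)) := by
          rw [hc_succ j, Real.rpow_add (by linarith : (0:ℝ) < 2*A), mul_assoc,
            Finset.prod_range_succ, Finset.prod_range_succ]
  -- final conclusion
  intro j hj
  have hG1 : 1 ≤ G j := (hG j).2 (Set.mem_insert _ _)
  have hcG : c j ≤ G j * ∑' i, ω i / κ i := by
    have hterm : ∀ i ∈ Finset.range j,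
        (ω i / κ i) * ∏ k ∈ Finset.Ico (i+1) j, s k / κ k ≤ (ω i / κ i) * G j := by
      intro i hi
      apply mul_le_mul_of_nonneg_left _ (hα0 i)
      rcases eq_or_lt_of_le (Nat.succ_le_of_lt (Finset.mem_range.mp hi)) with h | h
      · rw [← h, Finset.Ico_self, Finset.prod_empty, h]; exact hG1
      · have hIco : Finset.Ico (i+1) j = Finset.Icc (i+1) (j-1) := by
          rw [← Finset.Ico_add_one_right_eq_Icc]
          congr 1
          omega
        apply (hG j).2
        right
        exact ⟨i+1, j-1, Nat.le_add_left 1 i, by omega, by omega, by rw [hIco]⟩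
    calc c j ≤ ∑ i ∈ Finset.range j, (ω i / κ i) * G j := Finset.sum_le_sum hterm
      _ = (∑ i ∈ Finset.range j, ω i / κ i) * G j := by rw [Finset.sum_mul]
      _ ≤ (∑' i, ω i / κ i) * G j := by
        apply mul_le_mul_of_nonneg_right _ (by linarith)
        exact Summable.sum_le_tsum _ (fun i _ => hα0 i) hαsum
      _ = G j * ∑' i, ω i / κ i := mul_comm _ _
  calc y j ≤ (2 * A) ^ (c j) * max ((y 0) ^ (∏ i ∈ Finset.range j, s i / κ i))
        ((y 0) ^ (∏ i ∈ Finset.range j, r i / κ i)) := main j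
    _ ≤ (2 * A) ^ (G j * ∑' i, ω i / κ i) * max ((y 0) ^ (∏ i ∈ Finset.range j, s i / κ i))
        ((y 0) ^ (∏ i ∈ Finset.range j, r i / κ i)) :=
      mul_le_mul_of_nonneg_right (Real.rpow_le_rpow_of_exponent_le h2A hcG)
        (le_max_of_le_left (Real.rpow_nonneg (hy 0) _))
end

section
/- In the setting of the preceding two-term iteration lemma, limsup_{j→∞} y_j ≤ (2A)^{G ᾱ} max{y₀^{γ̄}, y₀^{β̄}}, where G = limsup_j G_j. -/
lemma aux_rpow_le_max {x a b e : ℝ} (hx : 0 ≤ x) (ha : 0 < a) (hae : a ≤ e) (heb : e ≤ b) :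
    x ^ e ≤ max (x ^ a) (x ^ b) := by
  rcases eq_or_lt_of_le hx with h0 | h0
  · have he : (0:ℝ) < e := lt_of_lt_of_le ha hae
    rw [← h0, Real.zero_rpow he.ne', Real.zero_rpow ha.ne']
    simp
  rcases le_or_gt 1 x with h1 | h1
  · exact le_max_of_le_right (Real.rpow_le_rpow_of_exponent_le h1 heb)
  · exact le_max_of_le_left (Real.rpow_le_rpow_of_exponent_ge h0 h1.le hae)

/-- In the setting of the two-term iteration lemma,
`limsup y_j ≤ (2A)^{G ᾱ} max{y₀^{γ̄}, y₀^{β̄}}`, where `G = limsup G_j`. -/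
theorem stmt_12 (y κ r s ω : ℕ → ℝ)
    (hy : ∀ j, 0 ≤ y j) (hκ : ∀ j, 0 < κ j) (hr : ∀ j, 0 < r j) (hrs : ∀ j, r j ≤ s j)
    (hω : ∀ j, 1 ≤ ω j)
    (hαsum : Summable (fun j => ω j / κ j))
    (β' γ' : ℝ) (hβ' : 0 < β') (hγ' : 0 < γ')
    (hβprod : Filter.Tendsto (fun j => ∏ i ∈ Finset.range j, r i / κ i)
      Filter.atTop (nhds β'))
    (hγprod : Filter.Tendsto (fun j => ∏ i ∈ Finset.range j, s i / κ i)
      Filter.atTop (nhds γ'))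
    (A : ℝ) (hA : 1 ≤ A)
    (hrec : ∀ j, y (j + 1) ≤ A ^ (ω j / κ j) * ((y j) ^ (r j) + (y j) ^ (s j)) ^ (1 / κ j))
    (G : ℕ → ℝ)
    (hG : ∀ j, IsGreatest
      (insert (1 : ℝ)
        {x : ℝ | ∃ m n : ℕ, 1 ≤ m ∧ m ≤ n ∧ n < j ∧ x = ∏ i ∈ Finset.Icc m n, s i / κ i})
      (G j)) :
    Filter.limsup y Filter.atTop ≤
      (2 * A) ^ ((Filter.limsup G Filter.atTop) * ∑' i, ω i / κ i) *
        max ((y 0) ^ γ') ((y 0) ^ β') := by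
  have hA0 : (0:ℝ) ≤ A := by linarith
  set D : ℝ := 2 * A with hDdef
  have hD1 : (1:ℝ) ≤ D := by nlinarith
  have hD0 : (0:ℝ) < D := by linarith
  set P : ℕ → ℝ := fun j => ∏ i ∈ Finset.range j, s i / κ i with hPdef
  set Q : ℕ → ℝ := fun j => ∏ i ∈ Finset.range j, r i / κ i with hQdef
  have hs : ∀ j, 0 < s j := fun j => lt_of_lt_of_le (hr j) (hrs j)
  have hγpos : ∀ i, 0 < s i / κ i := fun i => div_pos (hs i) (hκ i)
  have hβpos : ∀ i, 0 < r i / κ i := fun i => div_pos (hr i) (hκ i)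
  have hβγ : ∀ i, r i / κ i ≤ s i / κ i := fun i =>
    (div_le_div_iff_of_pos_right (hκ i)).mpr (hrs i)
  have hPpos : ∀ j, 0 < P j := fun j => Finset.prod_pos (fun i _ => hγpos i)
  have hQpos : ∀ j, 0 < Q j := fun j => Finset.prod_pos (fun i _ => hβpos i)
  have hQleP : ∀ j, Q j ≤ P j := fun j =>
    Finset.prod_le_prod (fun i _ => (hβpos i).le) (fun i _ => hβγ i)
  have hωκnn : ∀ i, 0 ≤ ω i / κ i := fun i =>
    div_nonneg (le_trans zero_le_one (hω i)) (hκ i).le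
  set c : ℕ → ℝ :=
    fun j => ∑ i ∈ Finset.range j, (ω i / κ i) * ∏ k ∈ Finset.Ico (i+1) j, (s k / κ k)
    with hcdef
  have hcnn : ∀ j, 0 ≤ c j := by
    intro j
    apply Finset.sum_nonneg
    intro i _
    exact mul_nonneg (hωκnn i) (Finset.prod_nonneg fun k _ => (hγpos k).le)
  have hcrec : ∀ j, c (j+1) = ω j / κ j + (s j / κ j) * c j := by
    intro j
    simp only [hcdef]
    rw [Finset.sum_range_succ, Finset.Ico_self, Finset.prod_empty, mul_one]
    have h2 : ∀ i ∈ Finset.range j,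
        (ω i / κ i) * ∏ k ∈ Finset.Ico (i+1) (j+1), (s k / κ k)
        = (s j / κ j) * ((ω i / κ i) * ∏ k ∈ Finset.Ico (i+1) j, (s k / κ k)) := by
      intro i hi
      rw [Finset.prod_Ico_succ_top (Nat.succ_le_of_lt (Finset.mem_range.mp hi))]
      ring
    rw [Finset.sum_congr rfl h2, ← Finset.mul_sum]
    ring
  -- one-step bound
  have hstep : ∀ j, y (j+1) ≤
      D ^ (ω j / κ j) * max (y j ^ (r j / κ j)) (y j ^ (s j / κ j)) := by
    intro j
    have hk : (0:ℝ) < 1 / κ j := one_div_pos.mpr (hκ j)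
    have hyj := hy j
    have hmax_nn : 0 ≤ max (y j ^ r j) (y j ^ s j) :=
      le_trans (Real.rpow_nonneg hyj _) (le_max_left _ _)
    have hsum : y j ^ r j + y j ^ s j ≤ 2 * max (y j ^ r j) (y j ^ s j) := by
      have h1 := le_max_left (y j ^ r j) (y j ^ s j)
      have h2 := le_max_right (y j ^ r j) (y j ^ s j)
      linarith
    have h4 : (max (y j ^ r j) (y j ^ s j)) ^ (1/κ j)
        ≤ max (y j ^ (r j / κ j)) (y j ^ (s j / κ j)) := by
      rcases max_choice (y j ^ r j) (y j ^ s j) with h | h <;> rw [h, ← Real.rpow_mul hyj]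
      · rw [mul_one_div]; exact le_max_left _ _
      · rw [mul_one_div]; exact le_max_right _ _
    have h5 : (2:ℝ) ^ (1/κ j) ≤ 2 ^ (ω j / κ j) := by
      apply Real.rpow_le_rpow_of_exponent_le one_le_two
      exact (div_le_div_iff_of_pos_right (hκ j)).mpr (hω j)
    calc y (j+1) ≤ A ^ (ω j / κ j) * (y j ^ r j + y j ^ s j) ^ (1 / κ j) := hrec j
      _ ≤ A ^ (ω j / κ j) *
          (2 ^ (ω j / κ j) * max (y j ^ (r j / κ j)) (y j ^ (s j / κ j))) := by
          apply mul_le_mul_of_nonneg_left _ (Real.rpow_nonneg hA0 _)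
          calc (y j ^ r j + y j ^ s j) ^ (1 / κ j)
              ≤ (2 * max (y j ^ r j) (y j ^ s j)) ^ (1 / κ j) :=
                Real.rpow_le_rpow
                  (add_nonneg (Real.rpow_nonneg hyj _) (Real.rpow_nonneg hyj _))
                  hsum hk.le
            _ = 2 ^ (1/κ j) * (max (y j ^ r j) (y j ^ s j)) ^ (1/κ j) :=
                Real.mul_rpow (by norm_num) hmax_nn
            _ ≤ 2 ^ (ω j / κ j) * max (y j ^ (r j / κ j)) (y j ^ (s j / κ j)) :=
                mul_le_mul h5 h4 (Real.rpow_nonneg hmax_nn _)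
                  (Real.rpow_nonneg (by norm_num) _)
      _ = D ^ (ω j / κ j) * max (y j ^ (r j / κ j)) (y j ^ (s j / κ j)) := by
          rw [hDdef, Real.mul_rpow (by norm_num) hA0]; ring
  -- the main finite iteration bound
  have key : ∀ j, y j ≤ D ^ c j * max (y 0 ^ P j) (y 0 ^ Q j) := by
    intro j
    induction j with
    | zero =>
        have hc0 : c 0 = 0 := by simp [hcdef]
        have hP0 : P 0 = 1 := by simp [hPdef]
        have hQ0 : Q 0 = 1 := by simp [hQdef]
        rw [hc0, hP0, hQ0, Real.rpow_zero, Real.rpow_one, one_mul, max_self]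
    | succ j ih =>
        have hMnn : 0 ≤ max (y 0 ^ P j) (y 0 ^ Q j) :=
          le_trans (Real.rpow_nonneg (hy 0) _) (le_max_left _ _)
        have hPs : P (j+1) = P j * (s j / κ j) := Finset.prod_range_succ _ _
        have hQs : Q (j+1) = Q j * (r j / κ j) := Finset.prod_range_succ _ _
        have hQ1pos : 0 < Q (j+1) := hQpos _
        have hup : ∀ u : ℝ, r j / κ j ≤ u → u ≤ s j / κ j →
            y j ^ u ≤ D ^ (c j * (s j / κ j)) *
              max (y 0 ^ P (j+1)) (y 0 ^ Q (j+1)) := by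
          intro u hu1 hu2
          have hu0 : (0:ℝ) < u := lt_of_lt_of_le (hβpos j) hu1
          have hmm : ∀ t : ℝ, Q j ≤ t → t ≤ P j →
              (y 0 ^ t) ^ u ≤ max (y 0 ^ P (j+1)) (y 0 ^ Q (j+1)) := by
            intro t ht1 ht2
            rw [← Real.rpow_mul (hy 0), max_comm]
            apply aux_rpow_le_max (hy 0) hQ1pos
            · rw [hQs]
              nlinarith [hQpos j, hβpos j]
            · rw [hPs]
              nlinarith [hQpos j, hPpos j, hu0]
          calc y j ^ u ≤ (D ^ c j * max (y 0 ^ P j) (y 0 ^ Q j)) ^ u :=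
                Real.rpow_le_rpow (hy j) ih hu0.le
            _ = D ^ (c j * u) * (max (y 0 ^ P j) (y 0 ^ Q j)) ^ u := by
                rw [Real.mul_rpow (Real.rpow_nonneg hD0.le _) hMnn,
                  ← Real.rpow_mul hD0.le]
            _ ≤ D ^ (c j * (s j / κ j)) * max (y 0 ^ P (j+1)) (y 0 ^ Q (j+1)) := by
                apply mul_le_mul
                · exact Real.rpow_le_rpow_of_exponent_le hD1
                    (mul_le_mul_of_nonneg_left hu2 (hcnn j))
                · rcases max_choice (y 0 ^ P j) (y 0 ^ Q j) with h | h <;> rw [h]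
                  · exact hmm (P j) (hQleP j) le_rfl
                  · exact hmm (Q j) le_rfl (hQleP j)
                · exact Real.rpow_nonneg hMnn u
                · exact Real.rpow_nonneg hD0.le _
        calc y (j+1) ≤ D ^ (ω j / κ j) *
              max (y j ^ (r j / κ j)) (y j ^ (s j / κ j)) := hstep j
          _ ≤ D ^ (ω j / κ j) * (D ^ (c j * (s j / κ j)) *
              max (y 0 ^ P (j+1)) (y 0 ^ Q (j+1))) := by
              apply mul_le_mul_of_nonneg_left _ (Real.rpow_nonneg hD0.le _)
              exact max_le (hup _ le_rfl (hβγ j)) (hup _ (hβγ j) le_rfl)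
          _ = D ^ c (j+1) * max (y 0 ^ P (j+1)) (y 0 ^ Q (j+1)) := by
              rw [← mul_assoc, ← Real.rpow_add hD0]
              congr 2
              rw [hcrec j]; ring
  -- bounds for G
  have hPbdd : BddAbove (Set.range P) := hγprod.bddAbove_range
  have hPinv : Filter.Tendsto (fun j => (P j)⁻¹) Filter.atTop (nhds γ'⁻¹) :=
    hγprod.inv₀ hγ'.ne'
  have hIbdd : BddAbove (Set.range fun j => (P j)⁻¹) := hPinv.bddAbove_range
  obtain ⟨M, hM⟩ := hPbdd
  obtain ⟨M', hM'⟩ := hIbdd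
  have hMle : ∀ j, P j ≤ M := fun j => hM ⟨j, rfl⟩
  have hM'le : ∀ j, (P j)⁻¹ ≤ M' := fun j => hM' ⟨j, rfl⟩
  have hM0 : 0 < M := lt_of_lt_of_le (hPpos 0) (hMle 0)
  have hprodIcc : ∀ m n, m ≤ n →
      (∏ i ∈ Finset.Icc m n, s i / κ i) = P (n+1) * (P m)⁻¹ := by
    intro m n h
    have h2 : P m * (∏ i ∈ Finset.Ico m (n+1), s i / κ i) = P (n+1) :=
      Finset.prod_range_mul_prod_Ico _ (by omega)
    rw [← Finset.Ico_add_one_right_eq_Icc, eq_mul_inv_iff_mul_eq₀ (hPpos m).ne', mul_comm]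
    exact h2
  have hC : ∀ j, G j ≤ max 1 (M * M') := by
    intro j
    obtain ⟨hmem, -⟩ := hG j
    rcases hmem with h1 | ⟨m, n, _, hmn, _, hx⟩
    · rw [h1]; exact le_max_left _ _
    · rw [hx, hprodIcc m n hmn]
      refine le_trans ?_ (le_max_right _ _)
      exact mul_le_mul (hMle _) (hM'le _) (inv_nonneg.mpr (hPpos m).le) hM0.le
  have hGmono : Monotone G := by
    apply monotone_nat_of_le_succ
    intro j
    apply (hG (j+1)).2
    rcases (hG j).1 with h1 | ⟨m, n, hm, hmn, hnj, hx⟩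
    · rw [h1]; exact Set.mem_insert _ _
    · exact Set.mem_insert_of_mem _ ⟨m, n, hm, hmn, by omega, hx⟩
  have hGbdd : BddAbove (Set.range G) := ⟨max 1 (M * M'), by
    rintro _ ⟨j, rfl⟩; exact hC j⟩
  have hGtend : Filter.Tendsto G Filter.atTop (nhds (⨆ j, G j)) :=
    tendsto_atTop_ciSup hGmono hGbdd
  have hGls : Filter.limsup G Filter.atTop = ⨆ j, G j := hGtend.limsup_eq
  have hGle : ∀ j, G j ≤ Filter.limsup G Filter.atTop := fun j => by
    rw [hGls]; exact le_ciSup hGbdd j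
  have hG1 : ∀ j, 1 ≤ G j := fun j => (hG j).2 (Set.mem_insert 1 _)
  have hGnn : 0 ≤ Filter.limsup G Filter.atTop :=
    le_trans (le_trans zero_le_one (hG1 0)) (hGle 0)
  -- bound c j by (limsup G) * α
  have hIco_le : ∀ i j, i < j → (∏ k ∈ Finset.Ico (i+1) j, s k / κ k) ≤ G j := by
    intro i j hij
    rcases eq_or_lt_of_le (Nat.succ_le_of_lt hij) with h | h
    · rw [← h, Finset.Ico_self, Finset.prod_empty]
      exact hG1 _
    · obtain ⟨n, rfl⟩ : ∃ n, j = n + 1 := ⟨j - 1, by omega⟩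
      rw [Finset.Ico_add_one_right_eq_Icc]
      exact (hG _).2 (Set.mem_insert_of_mem _
        ⟨i+1, n, Nat.succ_le_succ (Nat.zero_le i), by omega, by omega, rfl⟩)
  have hα : ∀ j, ∑ i ∈ Finset.range j, ω i / κ i ≤ ∑' i, ω i / κ i := fun j =>
    Summable.sum_le_tsum _ (fun i _ => hωκnn i) hαsum
  have hcle : ∀ j, c j ≤ Filter.limsup G Filter.atTop * ∑' i, ω i / κ i := by
    intro j
    calc c j ≤ ∑ i ∈ Finset.range j, (ω i / κ i) * Filter.limsup G Filter.atTop := by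
          apply Finset.sum_le_sum
          intro i hi
          exact mul_le_mul_of_nonneg_left
            ((hIco_le i j (Finset.mem_range.mp hi)).trans (hGle j)) (hωκnn i)
      _ = Filter.limsup G Filter.atTop * ∑ i ∈ Finset.range j, ω i / κ i := by
          rw [← Finset.sum_mul, mul_comm]
      _ ≤ Filter.limsup G Filter.atTop * ∑' i, ω i / κ i :=
          mul_le_mul_of_nonneg_left (hα j) hGnn
  -- final limit argument
  rcases eq_or_lt_of_le (hy 0) with h0 | h0
  · -- y 0 = 0, hence y ≡ 0
    have hz : ∀ j, y j = 0 := by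
      intro j
      have hk := key j
      rw [← h0, Real.zero_rpow (hPpos j).ne', Real.zero_rpow (hQpos j).ne'] at hk
      simp only [max_self, mul_zero] at hk
      exact le_antisymm hk (hy j)
    have hls : Filter.limsup y Filter.atTop = 0 := by
      have : y = fun _ : ℕ => (0:ℝ) := funext hz
      rw [this, Filter.limsup_const]
    rw [hls, ← h0, Real.zero_rpow hγ'.ne', Real.zero_rpow hβ'.ne']
    simp
  · -- y 0 > 0
    set L : ℝ := Filter.limsup G Filter.atTop * ∑' i, ω i / κ i with hLdef
    have hle : ∀ j, y j ≤ D ^ L * max (y 0 ^ P j) (y 0 ^ Q j) := by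
      intro j
      refine (key j).trans (mul_le_mul_of_nonneg_right ?_ ?_)
      · exact Real.rpow_le_rpow_of_exponent_le hD1 (hcle j)
      · exact le_trans (Real.rpow_nonneg (hy 0) _) (le_max_left _ _)
    have hTP : Filter.Tendsto (fun j => y 0 ^ P j) Filter.atTop (nhds (y 0 ^ γ')) :=
      (Real.continuousAt_const_rpow h0.ne').tendsto.comp hγprod
    have hTQ : Filter.Tendsto (fun j => y 0 ^ Q j) Filter.atTop (nhds (y 0 ^ β')) :=
      (Real.continuousAt_const_rpow h0.ne').tendsto.comp hβprod
    have hT : Filter.Tendsto (fun j => D ^ L * max (y 0 ^ P j) (y 0 ^ Q j))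
        Filter.atTop (nhds (D ^ L * max (y 0 ^ γ') (y 0 ^ β'))) :=
      (hTP.max hTQ).const_mul _
    calc Filter.limsup y Filter.atTop
        ≤ Filter.limsup (fun j => D ^ L * max (y 0 ^ P j) (y 0 ^ Q j))
            Filter.atTop :=
          Filter.limsup_le_limsup (Filter.Eventually.of_forall hle)
            (Filter.isCoboundedUnder_le_of_le Filter.atTop hy)
            hT.isBoundedUnder_le
      _ = D ^ L * max (y 0 ^ γ') (y 0 ^ β') := hT.limsup_eq
end

section
/- With a, δ, n, α_*, μ₀, θ(α), μ₁(α) as above, define κ(α) = 1 + (a−δ)(1/α_* − 1/α) and κ̄(α) = κ(α)·α/(α + μ₁(α)). Then α ↦ κ̄(α) is increasing on ((2−a)α_*/(1−a), ∞). -/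
/-!
Write `b = 1 − a`, `c = a − δ` and `s = α_*`, so that `(1 + b) s = n c`. On the domain one computes
`μ₁(α) = c α / (b α − (1 + b) s)`, hence `α / (α + μ₁(α)) = 1 − c / (b α − (1 + b) s + c)`.
Thus `κ̄ = κ · (1 − c / (b α − (1 + b) s + c))` is a product of two nonnegative increasing functions.
-/

open Set

namespace KappaBar

variable {b c s α : ℝ}

noncomputable def kappa (c s α : ℝ) : ℝ := 1 + c * (1 / s - 1 / α)

noncomputable def mu₁ (b c s α : ℝ) : ℝ :=
  c / b * (1 + 1 / (b * (α / s - 1)) * b) / (1 - 1 / (b * (α / s - 1)))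

lemma mu₁_eq (hb : 0 < b) (hs : 0 < s) (hα : (1 + b) * s < b * α) :
    mu₁ b c s α = c * α / (b * α - (1 + b) * s) := by
  have hsα : s < α := by nlinarith
  have hαs : α - s ≠ 0 := by linarith
  have hden : b * α - (1 + b) * s ≠ 0 := by linarith
  have hθ : b * (α / s - 1) = b * (α - s) / s := by field_simp
  rw [mu₁, hθ]
  field_simp
  ring

lemma div_add_mul_div_eq_one_sub_div {x : ℝ} (hα : α ≠ 0) (hx : x ≠ 0) (hxc : x + c ≠ 0) :
    α / (α + c * α / x) = 1 - c / (x + c) := by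
  field_simp
  ring

lemma monotoneOn_kappa (hc : 0 ≤ c) : MonotoneOn (kappa c s) (Ioi 0) := by
  intro x hx y _ hxy
  have : 1 / y ≤ 1 / x := one_div_le_one_div_of_le hx hxy
  unfold kappa
  nlinarith

lemma one_le_kappa (hc : 0 ≤ c) (hs : 0 < s) (hα : s ≤ α) : 1 ≤ kappa c s α := by
  have : 1 / α ≤ 1 / s := one_div_le_one_div_of_le hs hα
  unfold kappa
  nlinarith

lemma monotoneOn_one_sub_div {d : ℝ} (hb : 0 < b) (hc : 0 ≤ c) :
    MonotoneOn (fun α => 1 - c / (b * α - d + c)) (Ioi (d / b)) := by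
  intro x hx y _ hxy
  have hx' : 0 < b * x - d := by
    have := (div_lt_iff₀' hb).mp hx
    linarith
  have : b * x - d + c ≤ b * y - d + c := by nlinarith
  have := div_le_div_of_nonneg_left hc (by linarith) this
  dsimp only
  linarith

lemma one_sub_div_nonneg {d : ℝ} (hc : 0 ≤ c) (hd : 0 ≤ b * α - d) :
    0 ≤ 1 - c / (b * α - d + c) :=
  sub_nonneg.mpr (div_le_one_of_le₀ (by linarith) (by linarith))

theorem monotoneOn_kappa_mul_div_add_mu₁ (hb : 0 < b) (hc : 0 ≤ c) (hs : 0 < s) :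
    MonotoneOn (fun α => kappa c s α * α / (α + mu₁ b c s α)) (Ioi ((1 + b) * s / b)) := by
  have hdom : ∀ α ∈ Ioi ((1 + b) * s / b), (1 + b) * s < b * α ∧ s < α := fun α hα => by
    have := (div_lt_iff₀' hb).mp hα
    exact ⟨this, by nlinarith⟩
  have hprod : MonotoneOn (fun α => kappa c s α * (1 - c / (b * α - (1 + b) * s + c)))
      (Ioi ((1 + b) * s / b)) := by
    refine MonotoneOn.mul ?_ (monotoneOn_one_sub_div hb hc) ?_ ?_
    · exact (monotoneOn_kappa hc).mono fun α hα => hs.trans (hdom α hα).2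
    · exact fun α hα => zero_le_one.trans (one_le_kappa hc hs (hdom α hα).2.le)
    · exact fun α hα => one_sub_div_nonneg hc (sub_nonneg.mpr (hdom α hα).1.le)
  refine hprod.congr fun α hα => ?_
  obtain ⟨hbα, hsα⟩ := hdom α hα
  rw [mul_div_assoc, mu₁_eq hb hs hbα,
    div_add_mul_div_eq_one_sub_div (hs.trans hsα).ne' (by linarith) (by linarith)]

end KappaBar

open KappaBar in
theorem stmt_14_general (a δ : ℝ) (n : ℕ) (ha1 : a < 1) (hδa : δ < a)
    (hn : 2 ≤ n) :
    MonotoneOn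
      (fun α : ℝ =>
        (1 + (a - δ) * (1 / (n * (a - δ) / (2 - a)) - 1 / α)) * α /
          (α + ((a - δ) / (1 - a)) *
            (1 + (1 / ((1 - a) * (α / (n * (a - δ) / (2 - a)) - 1))) * (1 - a)) /
            (1 - 1 / ((1 - a) * (α / (n * (a - δ) / (2 - a)) - 1)))))
      (Set.Ioi ((2 - a) * (n * (a - δ) / (2 - a)) / (1 - a))) := by
  have hn0 : (0 : ℝ) < n := by exact_mod_cast (by omega : 0 < n)
  have hs : 0 < n * (a - δ) / (2 - a) := by
    have : 0 < a - δ := by linarith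
    have : 0 < 2 - a := by linarith
    positivity
  have h2a : 2 - a = 1 + (1 - a) := by ring
  rw [h2a] at hs ⊢
  exact monotoneOn_kappa_mul_div_add_mu₁ (by linarith) (by linarith) hs

/-- With `α_* = n(a−δ)/(2−a)`, `μ₀ = (a−δ)/(1−a)`, `θ(α) = 1/((1−a)(α/α_*−1))`,
`μ₁(α) = μ₀(1+θ(α)(1−a))/(1−θ(α))` and `κ(α) = 1 + (a−δ)(1/α_* − 1/α)`, the function
`κ̄(α) = κ(α)·α/(α + μ₁(α))` is increasing on `((2−a)α_*/(1−a), ∞)`. -/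
theorem stmt_14 (a δ : ℝ) (n : ℕ) (ha0 : 0 < a) (ha1 : a < 1) (hδ0 : 0 ≤ δ) (hδa : δ < a)
    (hn : 2 ≤ n) :
    MonotoneOn
      (fun α : ℝ =>
        (1 + (a - δ) * (1 / (n * (a - δ) / (2 - a)) - 1 / α)) * α /
          (α + ((a - δ) / (1 - a)) *
            (1 + (1 / ((1 - a) * (α / (n * (a - δ) / (2 - a)) - 1))) * (1 - a)) /
            (1 - 1 / ((1 - a) * (α / (n * (a - δ) / (2 - a)) - 1)))))
      (Set.Ioi ((2 - a) * (n * (a - δ) / (2 - a)) / (1 - a))) :=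
  stmt_14_general a δ n ha1 hδa hn
end

section
/- With notation as above, let x_* = (2 + √((2−a)(2 + 1/n) − 1))/(1−a) and suppose α₀ > (1 + x_*)α_*. Then κ̄(α₀) = κ(α₀)α₀/(α₀ + μ₁(α₀)) > 1. -/
/-- With `x_* = (2 + √((2−a)(2+1/n) − 1))/(1−a)` and `α₀ > (1+x_*)α_*`, one has
`κ̄(α₀) = κ(α₀)α₀/(α₀ + μ₁(α₀)) > 1`. -/
theorem stmt_15 (a δ : ℝ) (n : ℕ) (ha0 : 0 < a) (ha1 : a < 1) (hδ0 : 0 ≤ δ) (hδa : δ < a)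
    (hn : 2 ≤ n) (α₀ : ℝ)
    (hα₀ : (1 + (2 + Real.sqrt ((2 - a) * (2 + 1 / (n : ℝ)) - 1)) / (1 - a)) *
        (n * (a - δ) / (2 - a)) < α₀) :
    1 < (1 + (a - δ) * (1 / (n * (a - δ) / (2 - a)) - 1 / α₀)) * α₀ /
        (α₀ + ((a - δ) / (1 - a)) *
          (1 + (1 / ((1 - a) * (α₀ / (n * (a - δ) / (2 - a)) - 1))) * (1 - a)) /
          (1 - 1 / ((1 - a) * (α₀ / (n * (a - δ) / (2 - a)) - 1)))) := by
  have h2a : (0:ℝ) < 2 - a := by linarith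
  have h1a : (0:ℝ) < 1 - a := by linarith
  have had : (0:ℝ) < a - δ := by linarith
  have hn0 : (0:ℝ) < (n:ℝ) := by positivity
  set s : ℝ := (n:ℝ) * (a - δ) / (2 - a) with hs_def
  have hs : 0 < s := by positivity
  set x : ℝ := Real.sqrt ((2 - a) * (2 + 1 / (n : ℝ)) - 1) with hx_def
  have hD : 2 - a ≤ (2 - a) * (2 + 1 / (n:ℝ)) - 1 := by
    have h1 : (0:ℝ) < 1 / (n:ℝ) := by positivity
    nlinarith
  have hxr : Real.sqrt (2 - a) ≤ x := Real.sqrt_le_sqrt hD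
  have hr2 : Real.sqrt (2 - a) ^ 2 = 2 - a := Real.sq_sqrt h2a.le
  have hrnn : 0 ≤ Real.sqrt (2 - a) := Real.sqrt_nonneg _
  set y : ℝ := (1 - a) * (α₀ / s - 1) with hy_def
  have hα₀s : 1 + (2 + x) / (1 - a) < α₀ / s := (lt_div_iff₀ hs).mpr (by linarith [hα₀])
  have hy : 2 + Real.sqrt (2 - a) < y := by
    have h1 : (1 - a) * (1 + (2 + x) / (1 - a)) < (1 - a) * (α₀ / s) :=
      mul_lt_mul_of_pos_left hα₀s h1a
    have h2 : (1 - a) * (1 + (2 + x) / (1 - a)) = (1 - a) + (2 + x) := by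
      field_simp
    have h3 : (1 - a) * (α₀ / s) = y + (1 - a) := by rw [hy_def]; ring
    linarith
  have hy2 : 2 < y := by linarith
  have hα₀pos : 0 < α₀ := by
    have : 0 < (1 + (2 + x) / (1 - a)) * s := by positivity
    linarith
  -- rewrite θ = 1/y
  have hθ : (1:ℝ) / ((1 - a) * (α₀ / s - 1)) = 1 / y := by rw [hy_def]
  rw [hθ]
  -- denominator positivity
  have hyne : y ≠ 0 := by linarith
  have hy1 : y - 1 ≠ 0 := by linarith
  have h1y : 1 - 1 / y ≠ 0 := by
    rw [show (1:ℝ) - 1 / y = (y - 1) / y by field_simp]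
    exact div_ne_zero hy1 hyne
  have hμ : ((a - δ) / (1 - a)) * (1 + (1 / y) * (1 - a)) / (1 - 1 / y)
      = ((a - δ) / (1 - a)) * ((y + (1 - a)) / (y - 1)) := by
    field_simp
  rw [hμ]
  have hμpos : 0 < ((a - δ) / (1 - a)) * ((y + (1 - a)) / (y - 1)) := by
    apply mul_pos (by positivity)
    apply div_pos (by linarith) (by linarith)
  rw [lt_div_iff₀ (by linarith), one_mul]
  have hnum : (1 + (a - δ) * (1 / s - 1 / α₀)) * α₀ = α₀ + (a - δ) * (α₀ / s - 1) := by
    field_simp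
  rw [hnum]
  have hkey : ((a - δ) / (1 - a)) * ((y + (1 - a)) / (y - 1)) < (a - δ) * (α₀ / s - 1) := by
    have h1 : (a - δ) * (α₀ / s - 1) = (a - δ) / (1 - a) * y := by
      rw [hy_def]; field_simp
    rw [h1]
    apply mul_lt_mul_of_pos_left _ (by positivity)
    rw [div_lt_iff₀ (by linarith)]
    nlinarith [hxr, hr2, hrnn, hy]
  linarith
end
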